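/- arXiv:2508.21106 — 2 statements merged into one kernel-verified Lean document; each statement's English description precedes it below -/
import Mathlib

section
/- (Lemma 1: recursive representation of the preconditioner inverse.) Fix ε > 0 and vectors g₁, g₂, … ∈ ℝ^n. Define L₀ = √ε · I and L_{t+1} = L_t (I + α(ḡ_{t+1}) ḡ_{t+1} ḡ_{t+1}ᵀ) with ḡ_{t+1} = L_t^{-1} g_{t+1} and β_{t+1} = α(ḡ_{t+1})/(1 + α(ḡ_{t+1})‖ḡ_{t+1}‖²). Define vector sequences recursively by p_{t+1} = β_{t+1} ḡ_{t+1} and q_{t+1} = (I − Σ_{τ=1}^{t} q_τ p_τᵀ) ḡ_{t+1}. Then for every t ≥ 0, L_t^{-1} = (I − Σ_{τ=1}^{t} p_τ q_τᵀ) L₀^{-1}. -/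
open Matrix Finset

/-- The Euclidean norm of a vector in ℝ^n. -/
noncomputable def euclNorm {n : ℕ} (v : Fin n → ℝ) : ℝ :=
  Real.sqrt (∑ i, v i ^ 2)

/-- `α(v) = (√(1 + ‖v‖²) − 1)/‖v‖²` (equal to `0` when `v = 0`). -/
noncomputable def alphaF {n : ℕ} (v : Fin n → ℝ) : ℝ :=
  (Real.sqrt (1 + euclNorm v ^ 2) - 1) / euclNorm v ^ 2

/-- The rank-one outer product `u wᵀ`. -/
def outer {n : ℕ} (u w : Fin n → ℝ) : Matrix (Fin n) (Fin n) ℝ :=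
  Matrix.of fun i j => u i * w j




lemma outer_mul_mat {n : ℕ} (u w : Fin n → ℝ) (M : Matrix (Fin n) (Fin n) ℝ) :
    outer u w * M = outer u (Matrix.vecMul w M) := by
  ext i j
  simp only [outer, Matrix.mul_apply, Matrix.of_apply, Matrix.vecMul, dotProduct,
    Finset.mul_sum]
  exact Finset.sum_congr rfl fun k _ => by ring

lemma smul_outer {n : ℕ} (c : ℝ) (u w : Fin n → ℝ) :
    c • outer u w = outer (c • u) w := by
  ext i j; simp [outer, mul_assoc]

lemma transpose_outer {n : ℕ} (u w : Fin n → ℝ) :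
    (outer u w)ᵀ = outer w u := by
  ext i j; simp [outer, mul_comm]

lemma outer_mul_outer {n : ℕ} (u w x y : Fin n → ℝ) :
    outer u w * outer x y = (∑ i, w i * x i) • outer u y := by
  ext i j
  simp only [outer, Matrix.mul_apply, Matrix.of_apply, Matrix.smul_apply, smul_eq_mul,
    Finset.sum_mul, Finset.mul_sum]
  exact Finset.sum_congr rfl fun k _ => by ring

lemma one_add_alpha {n : ℕ} (v : Fin n → ℝ) :
    1 + alphaF v * euclNorm v ^ 2 = Real.sqrt (1 + euclNorm v ^ 2) := by
  rcases eq_or_ne (euclNorm v ^ 2) 0 with h | h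
  · simp [alphaF, h]
  · rw [alphaF, div_mul_cancel₀ _ h]; ring

lemma one_add_alpha_pos {n : ℕ} (v : Fin n → ℝ) :
    0 < 1 + alphaF v * euclNorm v ^ 2 := by
  rw [one_add_alpha]
  have : (0:ℝ) < 1 + euclNorm v ^ 2 := by positivity
  exact Real.sqrt_pos.2 this

lemma sm {n : ℕ} (v : Fin n → ℝ) :
    ((1 : Matrix (Fin n) (Fin n) ℝ) + alphaF v • outer v v) *
      ((1 : Matrix (Fin n) (Fin n) ℝ) -
        (alphaF v / (1 + alphaF v * euclNorm v ^ 2)) • outer v v) = 1 := by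
  set a := alphaF v with ha
  set s := euclNorm v ^ 2 with hs
  set b := a / (1 + a * s) with hb
  have hne : 1 + a * s ≠ 0 := ne_of_gt (one_add_alpha_pos v)
  have hsum : (∑ i, v i * v i) = s := by
    rw [hs, euclNorm, Real.sq_sqrt (by positivity)]
    exact Finset.sum_congr rfl fun i _ => (sq (v i)).symm
  have hP : outer v v * outer v v = s • outer v v := by
    rw [outer_mul_outer, hsum]
  have hkey : a - (b + a * b * s) = 0 := by
    have hbb : b * (1 + a * s) = a := div_mul_cancel₀ _ hne
    nlinarith [hbb]
  have expand : ((1 : Matrix (Fin n) (Fin n) ℝ) + a • outer v v) *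
      ((1 : Matrix (Fin n) (Fin n) ℝ) - b • outer v v)
      = 1 + (a - (b + a * b * s)) • outer v v := by
    rw [mul_sub, mul_one, add_mul, one_mul, smul_mul_assoc, mul_smul_comm, hP]
    rw [sub_smul, add_smul]
    abel_nf
    module
  rw [expand, hkey, zero_smul, add_zero]

/-- Lemma 1: with `L₀ = √ε · I`,
`L_{t+1} = L_t (I + α(ḡ_{t+1}) ḡ_{t+1} ḡ_{t+1}ᵀ)` for `ḡ_{t+1} = L_t⁻¹ g_{t+1}`
(here `gbar t` plays the role of `ḡ_{t+1}` and `g t` of `g_{t+1}`),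
`β_{t+1} = α(ḡ_{t+1})/(1 + α(ḡ_{t+1})‖ḡ_{t+1}‖²)`, `p_{t+1} = β_{t+1} ḡ_{t+1}` and
`q_{t+1} = (I − ∑_{τ≤t} q_τ p_τᵀ) ḡ_{t+1}`, one has
`L_t⁻¹ = (I − ∑_{τ≤t} p_τ q_τᵀ) L₀⁻¹` for every `t ≥ 0`. -/
theorem lemma1_preconditioner_inverse {n : ℕ} (ε : ℝ) (hε : 0 < ε)
    (g gbar p q : ℕ → Fin n → ℝ) (L : ℕ → Matrix (Fin n) (Fin n) ℝ)
    (hL0 : L 0 = Real.sqrt ε • (1 : Matrix (Fin n) (Fin n) ℝ))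
    (hgbar : ∀ t : ℕ, gbar t = (L t)⁻¹.mulVec (g t))
    (hLrec : ∀ t : ℕ, L (t + 1) =
      L t * ((1 : Matrix (Fin n) (Fin n) ℝ) +
        alphaF (gbar t) • outer (gbar t) (gbar t)))
    (hp : ∀ t : ℕ, p t =
      (alphaF (gbar t) / (1 + alphaF (gbar t) * euclNorm (gbar t) ^ 2)) • gbar t)
    (hq : ∀ t : ℕ, q t =
      ((1 : Matrix (Fin n) (Fin n) ℝ) -
        ∑ τ ∈ Finset.range t, outer (q τ) (p τ)).mulVec (gbar t)) :
    ∀ t : ℕ, (L t)⁻¹ =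
      ((1 : Matrix (Fin n) (Fin n) ℝ) -
        ∑ τ ∈ Finset.range t, outer (p τ) (q τ)) * (L 0)⁻¹ := by
  intro t
  induction t with
  | zero => simp
  | succ t ih =>
    rw [hLrec t, Matrix.mul_inv_rev, Matrix.inv_eq_right_inv (sm (gbar t)), ih, ← mul_assoc]
    congr 1
    rw [Finset.sum_range_succ]
    set S := ∑ τ ∈ Finset.range t, outer (p τ) (q τ) with hS
    have hqt : Matrix.vecMul (gbar t) ((1 : Matrix (Fin n) (Fin n) ℝ) - S) = q t := by
      rw [hq t]
      rw [← Matrix.mulVec_transpose]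
      have : ((1 : Matrix (Fin n) (Fin n) ℝ) - S)ᵀ =
          (1 : Matrix (Fin n) (Fin n) ℝ) - ∑ τ ∈ Finset.range t, outer (q τ) (p τ) := by
        rw [Matrix.transpose_sub, Matrix.transpose_one, hS, Matrix.transpose_sum]
        exact congrArg _ (Finset.sum_congr rfl fun τ _ => transpose_outer _ _)
      rw [this]
    have hout : outer (gbar t) (gbar t) * ((1 : Matrix (Fin n) (Fin n) ℝ) - S)
        = outer (gbar t) (q t) := by
      rw [outer_mul_mat, hqt]
    rw [sub_mul, one_mul, smul_mul_assoc, hout, smul_outer, ← hp t]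
    abel
end

section
/- (Boundedness of the AdaGram update direction.) Let L be an invertible n×n real matrix, g ∈ ℝ^n, ḡ = L^{-1} g, and L' = L(I + α(ḡ) ḡḡᵀ). Then ‖(L')^{-1} g‖ = ‖ḡ‖ / √(1 + ‖ḡ‖²) < 1; in particular the preconditioned update direction produced by one AdaGram step always has Euclidean norm strictly less than 1. -/
open Matrix Finset

lemma euclNorm_nonneg {n : ℕ} (v : Fin n → ℝ) : 0 ≤ euclNorm v :=
  Real.sqrt_nonneg _

lemma euclNorm_sq {n : ℕ} (v : Fin n → ℝ) : euclNorm v ^ 2 = ∑ i, v i ^ 2 :=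
  Real.sq_sqrt (Finset.sum_nonneg fun i _ => sq_nonneg _)

lemma euclNorm_smul {n : ℕ} (c : ℝ) (w : Fin n → ℝ) :
    euclNorm (c • w) = |c| * euclNorm w := by
  unfold euclNorm
  simp_rw [Pi.smul_apply, smul_eq_mul, mul_pow, ← Finset.mul_sum]
  rw [Real.sqrt_mul (sq_nonneg c), Real.sqrt_sq_eq_abs]

lemma outer_mul_outer_s16 {n : ℕ} (v : Fin n → ℝ) :
    outer v v * outer v v = (euclNorm v ^ 2) • outer v v := by
  ext i j
  simp only [Matrix.mul_apply, outer, Matrix.of_apply, Matrix.smul_apply,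
    smul_eq_mul, euclNorm_sq]
  rw [Finset.sum_mul]
  congr 1
  ext k
  ring

lemma outer_mulVec {n : ℕ} (v : Fin n → ℝ) :
    (outer v v).mulVec v = (euclNorm v ^ 2) • v := by
  ext i
  simp only [Matrix.mulVec, dotProduct, outer, Matrix.of_apply,
    Pi.smul_apply, smul_eq_mul, euclNorm_sq]
  rw [Finset.sum_mul]
  congr 1
  ext k
  ring

/-- boundedness of the AdaGram update direction: with `ḡ = L⁻¹ g`
and `L' = L(I + α(ḡ) ḡḡᵀ)`, one has `‖(L')⁻¹ g‖ = ‖ḡ‖/√(1 + ‖ḡ‖²) < 1`. -/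
theorem adagram_update_bounded {n : ℕ} (L : Matrix (Fin n) (Fin n) ℝ)
    (hL : IsUnit L.det) (g : Fin n → ℝ) :
    euclNorm ((L * ((1 : Matrix (Fin n) (Fin n) ℝ) +
        alphaF (L⁻¹.mulVec g) • outer (L⁻¹.mulVec g) (L⁻¹.mulVec g)))⁻¹.mulVec g)
      = euclNorm (L⁻¹.mulVec g) / Real.sqrt (1 + euclNorm (L⁻¹.mulVec g) ^ 2) ∧
    euclNorm ((L * ((1 : Matrix (Fin n) (Fin n) ℝ) +
        alphaF (L⁻¹.mulVec g) • outer (L⁻¹.mulVec g) (L⁻¹.mulVec g)))⁻¹.mulVec g) < 1 := by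
  set v : Fin n → ℝ := L⁻¹.mulVec g with hvdef
  set a : ℝ := alphaF v with hadef
  set t : ℝ := euclNorm v ^ 2 with htdef
  set s : ℝ := Real.sqrt (1 + euclNorm v ^ 2) with hsdef
  have ht0 : 0 ≤ t := by rw [htdef]; positivity
  have hssq : s ^ 2 = 1 + t := by
    rw [hsdef, htdef]; exact Real.sq_sqrt (by positivity)
  have hsnn : 0 ≤ s := by rw [hsdef]; exact Real.sqrt_nonneg _
  have hs1 : 1 ≤ s := by nlinarith [hssq, ht0, hsnn]
  have hs0 : 0 < s := lt_of_lt_of_le one_pos hs1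
  have hsne : s ≠ 0 := ne_of_gt hs0
  have h1 : 1 + a * t = s := by
    rcases eq_or_ne t 0 with h | h
    · have : a = 0 := by
        rw [hadef, alphaF, ← htdef, h]; simp
      rw [this, h]
      nlinarith [hssq]
    · rw [hadef, alphaF, ← htdef, ← hsdef, div_mul_cancel₀ _ h]
      ring
  set O : Matrix (Fin n) (Fin n) ℝ := outer v v with hOdef
  set M : Matrix (Fin n) (Fin n) ℝ := 1 + a • O with hMdef
  set N : Matrix (Fin n) (Fin n) ℝ := 1 - (a / s) • O with hNdef
  have hcoef : a / s + a / s * (a * t) = a := by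
    field_simp
    linear_combination a * h1
  have hMN : M * N = 1 := by
    rw [hMdef, hNdef, mul_sub, Matrix.mul_one, Matrix.mul_smul, add_mul, one_mul,
      Matrix.smul_mul, hOdef, outer_mul_outer_s16, ← htdef, smul_smul,
      smul_add, smul_smul, ← add_smul, hcoef]
    abel
  have hMdet : IsUnit M.det := Matrix.isUnit_det_of_right_inverse hMN
  have hMv : M.mulVec v = s • v := by
    rw [hMdef, Matrix.add_mulVec, Matrix.one_mulVec, Matrix.smul_mulVec,
      hOdef, outer_mulVec, ← htdef, smul_smul, ← h1]
    ext i
    simp [add_smul]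
    ring
  have hMinv : M⁻¹.mulVec v = s⁻¹ • v := by
    have : M.mulVec (s⁻¹ • v) = v := by
      rw [Matrix.mulVec_smul, hMv, smul_smul, inv_mul_cancel₀ hsne, one_smul]
    calc M⁻¹.mulVec v = M⁻¹.mulVec (M.mulVec (s⁻¹ • v)) := by rw [this]
      _ = (M⁻¹ * M).mulVec (s⁻¹ • v) := by rw [Matrix.mulVec_mulVec]
      _ = s⁻¹ • v := by rw [Matrix.nonsing_inv_mul M hMdet, Matrix.one_mulVec]
  have hkey : (L * M)⁻¹.mulVec g = s⁻¹ • v := by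
    rw [Matrix.mul_inv_rev, ← Matrix.mulVec_mulVec, ← hvdef, hMinv]
  have hmain : euclNorm ((L * M)⁻¹.mulVec g) = euclNorm v / s := by
    rw [hkey, euclNorm_smul, abs_of_pos (inv_pos.mpr hs0), inv_mul_eq_div]
  constructor
  · exact hmain
  · rw [hmain, div_lt_one hs0]
    nlinarith [euclNorm_nonneg v, hssq, htdef]
end
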